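/- Let a and b be strictly increasing words of integers such that the concatenation ab is a reduced word for some element of S_ℤ. Suppose a contains at least one letter unpaired with respect to pair(a,b), and let x be the last (largest) such unpaired letter of a. Then x−1 does not occur in b, and there exists q ∈ ℕ such that x+i occurs in a and x−1+i occurs in b for all 1 ≤ i ≤ q, while x+q+1 does not occur in a and x+q does not occur in b. -/

import Mathlib

namespace QPaper

abbrev Std := ℕ × Bool
abbrev PLetter := ℤ × Bool
abbrev NLet := ℕ × Bool
abbrev Tab := ℕ × ℕ → Option NLet
abbrev ZTab := ℕ × ℕ → Option PLetter

/-- iterate a partial operator -/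
def iterO {B : Type} (g : B → Option B) : ℕ → B → Option B
  | 0, b => some b
  | k + 1, b => (iterO g k b).bind g

/-- Raw data of a crystal with operators `e_i, f_i` (`1 ≤ i ≤ n-1`),
`e_1bar, f_1bar`, `e_0, f_0`, and a weight map with coordinates indexed `1,…,n`. -/
structure Crystal (n : ℕ) (B : Type) where
  wt : B → ℕ → ℤ
  e : ℕ → B → Option B
  f : ℕ → B → Option B
  ebar : B → Option B
  fbar : B → Option B
  e0 : B → Option B
  f0 : B → Option B

namespace Crystal

variable {n : ℕ} {B B' B'' : Type}

noncomputable def eps (C : Crystal n B) (i : ℕ) (b : B) : ℕ := sSup {k | iterO (C.e i) k b ≠ none}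
noncomputable def phi (C : Crystal n B) (i : ℕ) (b : B) : ℕ := sSup {k | iterO (C.f i) k b ≠ none}
noncomputable def epsBar (C : Crystal n B) (b : B) : ℕ := sSup {k | iterO C.ebar k b ≠ none}
noncomputable def phiBar (C : Crystal n B) (b : B) : ℕ := sSup {k | iterO C.fbar k b ≠ none}
noncomputable def eps0 (C : Crystal n B) (b : B) : ℕ := sSup {k | iterO C.e0 k b ≠ none}
noncomputable def phi0 (C : Crystal n B) (b : B) : ℕ := sSup {k | iterO C.f0 k b ≠ none}

/-- The `gl_n`-crystal axioms (S1)-(S2). -/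
structure IsGL (C : Crystal n B) : Prop where
  wt_zero : ∀ b i, i = 0 ∨ n < i → C.wt b i = 0
  e_range : ∀ i b, i = 0 ∨ n ≤ i → C.e i b = none
  f_range : ∀ i b, i = 0 ∨ n ≤ i → C.f i b = none
  e_bdd : ∀ i b, ∃ N, iterO (C.e i) N b = none
  f_bdd : ∀ i b, ∃ N, iterO (C.f i) N b = none
  ef_iff : ∀ i, 1 ≤ i → i ≤ n - 1 → ∀ b c, C.e i b = some c ↔ C.f i c = some b
  e_wt : ∀ i, 1 ≤ i → i ≤ n - 1 → ∀ b c, C.e i b = some c →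
    ∀ j, C.wt c j = C.wt b j + (if j = i then 1 else 0) - (if j = i + 1 then 1 else 0)
  string_eq : ∀ i, 1 ≤ i → i ≤ n - 1 → ∀ b,
    (C.phi i b : ℤ) - (C.eps i b : ℤ) = C.wt b i - C.wt b (i + 1)

/-- The `q_n`-crystal axioms (P1)-(P3) on top of the `gl_n` ones. -/
structure IsQ (C : Crystal n B) extends IsGL C : Prop where
  wt_nonneg : ∀ b i, 0 ≤ C.wt b i
  ebar_bdd : ∀ b, ∃ N, iterO C.ebar N b = none
  fbar_bdd : ∀ b, ∃ N, iterO C.fbar N b = none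
  bar_iff : ∀ b c, C.ebar b = some c ↔ C.fbar c = some b
  ebar_wt : 2 ≤ n → ∀ b c, C.ebar b = some c →
    (∀ j, C.wt c j = C.wt b j + (if j = 1 then 1 else 0) - (if j = 2 then 1 else 0)) ∧
    (∀ i, 3 ≤ i → i ≤ n - 1 → C.eps i b = C.eps i c ∧ C.phi i b = C.phi i c)
  bar_comm : 2 ≤ n → ∀ i, 3 ≤ i → i ≤ n - 1 → ∀ b,
    (C.e i b).bind C.ebar = (C.ebar b).bind (C.e i) ∧
    (C.e i b).bind C.fbar = (C.fbar b).bind (C.e i) ∧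
    (C.f i b).bind C.ebar = (C.ebar b).bind (C.f i) ∧
    (C.f i b).bind C.fbar = (C.fbar b).bind (C.f i)
  bar_string : 2 ≤ n → ∀ b,
    C.epsBar b + C.phiBar b = (if C.wt b 1 = 0 ∧ C.wt b 2 = 0 then 0 else 1)
  bar_none : n < 2 → ∀ b, C.ebar b = none ∧ C.fbar b = none

/-- The `q⁺_n`-crystal axioms (Q1)-(Q3) on top of the `q_n` ones. -/
structure IsQPlus (C : Crystal n B) extends IsQ C : Prop where
  e0_bdd : ∀ b, ∃ N, iterO C.e0 N b = none
  f0_bdd : ∀ b, ∃ N, iterO C.f0 N b = none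
  zero_iff : ∀ b c, C.e0 b = some c ↔ C.f0 c = some b
  e0_wt : ∀ b c, C.e0 b = some c →
    (∀ j, C.wt c j = C.wt b j) ∧
    (∀ i, 1 ≤ i → i ≤ n - 1 → C.eps i b = C.eps i c ∧ C.phi i b = C.phi i c) ∧
    (C.epsBar b = C.epsBar c ∧ C.phiBar b = C.phiBar c)
  zero_comm : ∀ i, 2 ≤ i → i ≤ n - 1 → ∀ b,
    (C.e i b).bind C.e0 = (C.e0 b).bind (C.e i) ∧
    (C.e i b).bind C.f0 = (C.f0 b).bind (C.e i) ∧
    (C.f i b).bind C.e0 = (C.e0 b).bind (C.f i) ∧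
    (C.f i b).bind C.f0 = (C.f0 b).bind (C.f i)
  zero_string : ∀ b, C.eps0 b + C.phi0 b = (if C.wt b 1 = 0 then 0 else 1)

/-- The standard `q⁺_n`-crystal `𝔹⁺_n` on letters `(k, primed?)`, `1 ≤ k ≤ n`. -/
def stdC (n : ℕ) : Crystal n Std where
  wt := fun l j => if j = l.1 ∧ 1 ≤ l.1 ∧ l.1 ≤ n then 1 else 0
  e := fun i l => if 1 ≤ i ∧ i ≤ n - 1 ∧ l.1 = i + 1 then some (i, l.2) else none
  f := fun i l => if 1 ≤ i ∧ i ≤ n - 1 ∧ l.1 = i then some (i + 1, l.2) else none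
  ebar := fun l => if 2 ≤ n ∧ l.1 = 2 then some (1, l.2) else none
  fbar := fun l => if 2 ≤ n ∧ l.1 = 1 then some (2, l.2) else none
  e0 := fun l => if 1 ≤ n ∧ l = (1, true) then some (1, false) else none
  f0 := fun l => if 1 ≤ n ∧ l = (1, false) then some (1, true) else none

/-- The one-element crystal of weight `0`. -/
def unitC (n : ℕ) : Crystal n PUnit where
  wt := fun _ _ => 0
  e := fun _ _ => none
  f := fun _ _ => none
  ebar := fun _ => none
  fbar := fun _ => none
  e0 := fun _ => none
  f0 := fun _ => none

/-- The `q⁺_n`-tensor product of two crystals (anti-Kashiwara convention). -/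
noncomputable def tensor (C : Crystal n B) (D : Crystal n B') : Crystal n (B × B') where
  wt := fun x j => C.wt x.1 j + D.wt x.2 j
  e := fun i x =>
    if C.eps i x.1 ≤ D.phi i x.2 then (D.e i x.2).map (fun c => (x.1, c))
    else (C.e i x.1).map (fun b => (b, x.2))
  f := fun i x =>
    if C.eps i x.1 < D.phi i x.2 then (D.f i x.2).map (fun c => (x.1, c))
    else (C.f i x.1).map (fun b => (b, x.2))
  e0 := fun x =>
    if C.wt x.1 1 ≠ 0 then (C.e0 x.1).map (fun b => (b, x.2))
    else (D.e0 x.2).map (fun c => (x.1, c))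
  f0 := fun x =>
    if C.wt x.1 1 ≠ 0 then (C.f0 x.1).map (fun b => (b, x.2))
    else (D.f0 x.2).map (fun c => (x.1, c))
  ebar := fun x =>
    if C.wt x.1 1 = 0 ∧ C.wt x.1 2 = 0 then (D.ebar x.2).map (fun c => (x.1, c))
    else if h : C.wt x.1 1 = 0 ∧ ((C.ebar x.1).bind C.f0).isSome ∧ (D.e0 x.2).isSome then
      some (((C.ebar x.1).bind C.f0).get h.2.1, (D.e0 x.2).get h.2.2)
    else if h : C.wt x.1 1 = 0 ∧ ((C.ebar x.1).bind C.e0).isSome ∧ (D.f0 x.2).isSome then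
      some (((C.ebar x.1).bind C.e0).get h.2.1, (D.f0 x.2).get h.2.2)
    else (C.ebar x.1).map (fun b => (b, x.2))
  fbar := fun x =>
    if C.wt x.1 1 = 0 ∧ C.wt x.1 2 = 0 then (D.fbar x.2).map (fun c => (x.1, c))
    else if h : C.wt x.1 1 = 1 ∧ ((C.f0 x.1).bind C.fbar).isSome ∧ (D.e0 x.2).isSome then
      some (((C.f0 x.1).bind C.fbar).get h.2.1, (D.e0 x.2).get h.2.2)
    else if h : C.wt x.1 1 = 1 ∧ ((C.e0 x.1).bind C.fbar).isSome ∧ (D.f0 x.2).isSome then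
      some (((C.e0 x.1).bind C.fbar).get h.2.1, (D.f0 x.2).get h.2.2)
    else (C.fbar x.1).map (fun b => (b, x.2))

/-- Underlying type of the `m`-th tensor power of the standard crystal. -/
def PowT : ℕ → Type
  | 0 => PUnit
  | m + 1 => PowT m × Std

/-- The `m`-th `q⁺_n`-tensor power `(𝔹⁺_n)^{⊗m}`. -/
noncomputable def powC (n : ℕ) : (m : ℕ) → Crystal n (PowT m)
  | 0 => unitC n
  | m + 1 => tensor (powC n m) (stdC n)

/-- One edge of the crystal graph. -/
def step (C : Crystal n B) (b c : B) : Prop :=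
  (∃ i, C.f i b = some c) ∨ C.fbar b = some c ∨ C.f0 b = some c

/-- Weak connectivity in the crystal graph. -/
def joined (C : Crystal n B) : B → B → Prop :=
  Relation.ReflTransGen (fun b c => step C b c ∨ step C c b)

/-- Weakly connected component (full subcrystal) through `b`. -/
def component (C : Crystal n B) (b : B) : Set B := {c | joined C b c}

def mapsAgree (C : Crystal n B) (D : Crystal n B') (φ : B → B') (x : B) : Prop :=
  (∀ j, D.wt (φ x) j = C.wt x j) ∧
  (∀ i, (C.e i x).map φ = D.e i (φ x)) ∧
  (∀ i, (C.f i x).map φ = D.f i (φ x)) ∧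
  ((C.ebar x).map φ = D.ebar (φ x)) ∧
  ((C.fbar x).map φ = D.fbar (φ x)) ∧
  ((C.e0 x).map φ = D.e0 (φ x)) ∧
  ((C.f0 x).map φ = D.f0 (φ x))

/-- `S ⊆ B` and `T ⊆ B'` are isomorphic as (sub)crystals. -/
def IsIsoOn (C : Crystal n B) (D : Crystal n B') (S : Set B) (T : Set B') : Prop :=
  ∃ φ : B → B', Set.BijOn φ S T ∧ ∀ x ∈ S, mapsAgree C D φ x

/-- `φ` is an isomorphism of crystals. -/
def IsIso (C : Crystal n B) (D : Crystal n B') (φ : B → B') : Prop :=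
  Function.Bijective φ ∧ ∀ x, mapsAgree C D φ x

/-- A quasi-isomorphism of crystals: restricts to an isomorphism on every full subcrystal. -/
def IsQuasiIso (C : Crystal n B) (D : Crystal n B') (ψ : B → B') : Prop :=
  ∀ b : B, ψ '' component C b = component D (ψ b) ∧
    Set.InjOn ψ (component C b) ∧
    ∀ x ∈ component C b, mapsAgree C D ψ x

/-- Normality for `q⁺_n`-crystals. -/
def IsNormal (C : Crystal n B) : Prop :=
  IsQPlus C ∧ ∀ b : B, ∃ (m : ℕ) (x : PowT m),
    IsIsoOn C (powC n m) (component C b) (component (powC n m) x)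

/-- The string-reversing involution `σ_i` from equation (3.3). -/
noncomputable def sigma (C : Crystal n B) (i : ℕ) (b : B) : B :=
  if C.eps i b ≤ C.phi i b then (iterO (C.f i) (C.phi i b - C.eps i b) b).getD b
  else (iterO (C.e i) (C.eps i b - C.phi i b) b).getD b

/-- The involution `σ_0`. -/
noncomputable def sigma0 (C : Crystal n B) (b : B) : B :=
  (C.e0 b).getD ((C.f0 b).getD b)

/-- `σ_k ⋯ σ_2 σ_1` (applying `σ_1` first). -/
noncomputable def sigmaDown (C : Crystal n B) : ℕ → B → B
  | 0 => id
  | k + 1 => fun b => C.sigma (k + 1) (C.sigmaDown k b)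

/-- `σ_1 σ_2 ⋯ σ_k` (applying `σ_k` first). -/
noncomputable def sigmaUp (C : Crystal n B) : ℕ → B → B
  | 0 => id
  | k + 1 => fun b => C.sigmaUp k (C.sigma (k + 1) b)

noncomputable def sigmaW0Aux (C : Crystal n B) : ℕ → B → B
  | 0 => id
  | k + 1 => fun b => C.sigmaW0Aux k (C.sigmaDown (k + 1) b)

/-- `σ_{w_0} = (σ_1)(σ_2σ_1)⋯(σ_{n-1}⋯σ_2σ_1)`. -/
noncomputable def sigmaW0 (C : Crystal n B) : B → B := C.sigmaW0Aux (n - 1)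

noncomputable def sigmaW0InvAux (C : Crystal n B) : ℕ → B → B
  | 0 => id
  | k + 1 => fun b => C.sigmaUp (k + 1) (C.sigmaW0InvAux k b)

/-- The inverse `σ_{w_0}^{-1}`. -/
noncomputable def sigmaW0Inv (C : Crystal n B) : B → B := C.sigmaW0InvAux (n - 1)

/-- `σ_k ⋯ σ_1 σ_0` (applying `σ_0` first). -/
noncomputable def sigmaDown0 (C : Crystal n B) : ℕ → B → B
  | 0 => C.sigma0
  | k + 1 => fun b => C.sigma (k + 1) (C.sigmaDown0 k b)

noncomputable def sigmaW0PlusAux (C : Crystal n B) : ℕ → B → B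
  | 0 => id
  | k + 1 => fun b => C.sigmaW0PlusAux k (C.sigmaDown0 k b)

/-- `σ_{w_0^+} = (σ_0)(σ_1σ_0)(σ_2σ_1σ_0)⋯(σ_{n-1}⋯σ_1σ_0)`. -/
noncomputable def sigmaW0Plus (C : Crystal n B) : B → B := C.sigmaW0PlusAux n

/-- The operators `e_{ī}` for `1 ≤ i ≤ n-1`, with `e_{1̄} = ebar` and
`e_{ī} = σ_{i-1} σ_i e_{\overline{i-1}} σ_i σ_{i-1}`. -/
noncomputable def eBarIdx (C : Crystal n B) : ℕ → B → Option B
  | 0, _ => none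
  | 1, b => C.ebar b
  | k + 2, b =>
    (C.eBarIdx (k + 1) (C.sigma (k + 2) (C.sigma (k + 1) b))).map
      (fun c => C.sigma (k + 1) (C.sigma (k + 2) c))

/-- The operators `f_{ī}`. -/
noncomputable def fBarIdx (C : Crystal n B) : ℕ → B → Option B
  | 0, _ => none
  | 1, b => C.fbar b
  | k + 2, b =>
    (C.fBarIdx (k + 1) (C.sigma (k + 2) (C.sigma (k + 1) b))).map
      (fun c => C.sigma (k + 1) (C.sigma (k + 2) c))

/-- `e_{ī′} = σ_{w_0} f_{\overline{n-i}} σ_{w_0}^{-1}`. -/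
noncomputable def eBarPrime (C : Crystal n B) (i : ℕ) (b : B) : Option B :=
  (C.fBarIdx (n - i) (C.sigmaW0Inv b)).map C.sigmaW0

/-- `f_{ī′} = σ_{w_0} e_{\overline{n-i}} σ_{w_0}^{-1}`. -/
noncomputable def fBarPrime (C : Crystal n B) (i : ℕ) (b : B) : Option B :=
  (C.eBarIdx (n - i) (C.sigmaW0Inv b)).map C.sigmaW0

/-- `e_0^{[i]} = σ_{i-1} ⋯ σ_1 e_0 σ_1 ⋯ σ_{i-1}`. -/
noncomputable def e0Idx (C : Crystal n B) (i : ℕ) (b : B) : Option B :=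
  (C.e0 (C.sigmaUp (i - 1) b)).map (C.sigmaDown (i - 1))

/-- `f_0^{[i]} = σ_{i-1} ⋯ σ_1 f_0 σ_1 ⋯ σ_{i-1}`. -/
noncomputable def f0Idx (C : Crystal n B) (i : ℕ) (b : B) : Option B :=
  (C.f0 (C.sigmaUp (i - 1) b)).map (C.sigmaDown (i - 1))

def IsGLHighest (C : Crystal n B) (b : B) : Prop :=
  ∀ i, 1 ≤ i → i ≤ n - 1 → C.e i b = none

def IsGLLowest (C : Crystal n B) (b : B) : Prop :=
  ∀ i, 1 ≤ i → i ≤ n - 1 → C.f i b = none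

def IsQHighest (C : Crystal n B) (b : B) : Prop :=
  IsGLHighest C b ∧ ∀ i, 1 ≤ i → i ≤ n - 1 → C.eBarIdx i b = none

def IsQLowest (C : Crystal n B) (b : B) : Prop :=
  IsGLLowest C b ∧ ∀ i, 1 ≤ i → i ≤ n - 1 → C.fBarPrime i b = none

def IsQPlusHighest (C : Crystal n B) (b : B) : Prop :=
  IsQHighest C b ∧ ∀ i, 1 ≤ i → i ≤ n → C.e0Idx i b = none

def IsQPlusLowest (C : Crystal n B) (b : B) : Prop :=
  IsQLowest C b ∧ ∀ i, 1 ≤ i → i ≤ n → C.f0Idx i b = none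

/-! ### `gl_n`-specific notions (ignoring the barred and `0` operators) -/

def glStep (C : Crystal n B) (b c : B) : Prop := ∃ i, C.f i b = some c

def glJoined (C : Crystal n B) : B → B → Prop :=
  Relation.ReflTransGen (fun b c => glStep C b c ∨ glStep C c b)

def glComponent (C : Crystal n B) (b : B) : Set B := {c | glJoined C b c}

def glMapsAgree (C : Crystal n B) (D : Crystal n B') (φ : B → B') (x : B) : Prop :=
  (∀ j, D.wt (φ x) j = C.wt x j) ∧
  (∀ i, (C.e i x).map φ = D.e i (φ x)) ∧
  (∀ i, (C.f i x).map φ = D.f i (φ x))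

def IsGLIsoOn (C : Crystal n B) (D : Crystal n B') (S : Set B) (T : Set B') : Prop :=
  ∃ φ : B → B', Set.BijOn φ S T ∧ ∀ x ∈ S, glMapsAgree C D φ x

/-- The standard `gl_n`-crystal `𝔹_n` on the letters `1,…,n`. -/
def stdGLC (n : ℕ) : Crystal n ℕ where
  wt := fun l j => if j = l ∧ 1 ≤ l ∧ l ≤ n then 1 else 0
  e := fun i l => if 1 ≤ i ∧ i ≤ n - 1 ∧ l = i + 1 then some i else none
  f := fun i l => if 1 ≤ i ∧ i ≤ n - 1 ∧ l = i then some (i + 1) else none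
  ebar := fun _ => none
  fbar := fun _ => none
  e0 := fun _ => none
  f0 := fun _ => none

def GLPowT : ℕ → Type
  | 0 => PUnit
  | m + 1 => GLPowT m × ℕ

noncomputable def glPowC (n : ℕ) : (m : ℕ) → Crystal n (GLPowT m)
  | 0 => unitC n
  | m + 1 => tensor (glPowC n m) (stdGLC n)

/-- Normality for `gl_n`-crystals. -/
def IsGLNormal (C : Crystal n B) : Prop :=
  IsGL C ∧ ∀ b : B, ∃ (m : ℕ) (x : GLPowT m),
    IsGLIsoOn C (glPowC n m) (glComponent C b) (glComponent (glPowC n m) x)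

end Crystal

open Crystal

/-- Character of a finite crystal, as a polynomial in `x_1,…,x_n`. -/
noncomputable def char {n : ℕ} {B : Type} [Fintype B] (C : Crystal n B) :
    MvPolynomial (Fin n) ℤ :=
  ∑ b : B, ∏ i : Fin n, MvPolynomial.X i ^ (C.wt b ((i : ℕ) + 1)).toNat

-- Restriction of a partial operator to a subtype.
open Classical in
noncomputable def restrictP {α : Type} (P : α → Prop) (g : α → Option α) (x : Subtype P) :
    Option (Subtype P) :=
  (g x.1).bind (fun y => if h : P y then some ⟨y, h⟩ else none)

/-! ### The crystal of words `W⁺_n(m)` -/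

/-- `i`-unpaired indices (0-based) of a word, via the parenthesis matching where letters
with value `i` are `)` and letters with value `i+1` are `(`. -/
def wUnpaired (i : ℕ) (w : List (ℕ × Bool)) : List ℕ :=
  let r := ((List.range w.length).zip w).foldl (fun (st : List ℕ × List ℕ) p =>
    if p.2.1 = i + 1 then (p.1 :: st.1, st.2)
    else if p.2.1 = i then
      match st.1 with
      | _o :: os => (os, st.2)
      | [] => (st.1, p.1 :: st.2)
    else st) ([], [])
  r.2.reverse ++ r.1.reverse

def wordF (n i : ℕ) (w : List (ℕ × Bool)) : Option (List (ℕ × Bool)) :=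
  if 1 ≤ i ∧ i ≤ n - 1 then
    match ((wUnpaired i w).filter (fun j => (w.getD j default).1 == i)).getLast? with
    | none => none
    | some j => some (w.set j (i + 1, (w.getD j default).2))
  else none

def wordE (n i : ℕ) (w : List (ℕ × Bool)) : Option (List (ℕ × Bool)) :=
  if 1 ≤ i ∧ i ≤ n - 1 then
    match ((wUnpaired i w).filter (fun j => (w.getD j default).1 == i + 1)).head? with
    | none => none
    | some j => some (w.set j (i, (w.getD j default).2))
  else none

def wordFbar (n : ℕ) (w : List (ℕ × Bool)) : Option (List (ℕ × Bool)) :=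
  if 2 ≤ n then
    match w.findIdx? (fun l => l.1 == 1) with
    | none => none
    | some j =>
      if (w.take j).any (fun l => l.1 == 2) then none
      else
        match (w.drop (j + 1)).findIdx? (fun l => l.1 == 1) with
        | none => some (w.set j (2, (w.getD j default).2))
        | some k' =>
          let k := j + 1 + k'
          let a := w.getD j default
          let b := w.getD k default
          if a.2 = b.2 then some (w.set j (2, a.2))
          else if a.2 = false then some ((w.set j (2, true)).set k (1, false))
          else some ((w.set j (2, false)).set k (1, true))
  else none

def wordEbar (n : ℕ) (w : List (ℕ × Bool)) : Option (List (ℕ × Bool)) :=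
  if 2 ≤ n then
    match w.findIdx? (fun l => l.1 == 2) with
    | none => none
    | some j =>
      if (w.take j).any (fun l => l.1 == 1) then none
      else
        match (w.drop (j + 1)).findIdx? (fun l => l.1 == 1) with
        | none => some (w.set j (1, (w.getD j default).2))
        | some k' =>
          let k := j + 1 + k'
          let a := w.getD j default
          let b := w.getD k default
          if a.2 = b.2 then some (w.set j (1, a.2))
          else if a.2 = true then some ((w.set j (1, false)).set k (1, true))
          else some ((w.set j (1, true)).set k (1, false))
  else none

def wordF0 (w : List (ℕ × Bool)) : Option (List (ℕ × Bool)) :=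
  match w.findIdx? (fun l => l.1 == 1) with
  | some j => if (w.getD j default).2 = false then some (w.set j (1, true)) else none
  | none => none

def wordE0 (w : List (ℕ × Bool)) : Option (List (ℕ × Bool)) :=
  match w.findIdx? (fun l => l.1 == 1) with
  | some j => if (w.getD j default).2 = true then some (w.set j (1, false)) else none
  | none => none

/-- Membership in `W⁺_n(m)`. -/
def WordP (n m : ℕ) (w : List (ℕ × Bool)) : Prop :=
  w.length = m ∧ ∀ l ∈ w, 1 ≤ l.1 ∧ l.1 ≤ n

/-- The `q⁺_n`-crystal of words `W⁺_n(m)`. -/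
noncomputable def wordC (n m : ℕ) : Crystal n (Subtype (WordP n m)) where
  wt := fun w k =>
    if 1 ≤ k ∧ k ≤ n then ((w.1.filter (fun l => l.1 == k)).length : ℤ) else 0
  e := fun i => restrictP _ (wordE n i)
  f := fun i => restrictP _ (wordF n i)
  ebar := restrictP _ (wordEbar n)
  fbar := restrictP _ (wordFbar n)
  e0 := restrictP _ wordE0
  f0 := restrictP _ wordF0

/-- Interpret a word as an element of `(𝔹⁺_n)^{⊗m}`. -/
def toPow : (m : ℕ) → List (ℕ × Bool) → PowT m
  | 0, _ => PUnit.unit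
  | m + 1, w => (toPow m w.dropLast, w.getLast?.getD (0, false))


/-! ### Involution words and increasing factorizations -/

/-- One step of the Demazure product. -/
def demStep (π : Equiv.Perm ℤ) (i : ℤ) : Equiv.Perm ℤ :=
  if π (i + 1) < π i then π else π * Equiv.swap i (i + 1)

/-- Demazure product `1 ∘ s_{a_1} ∘ ⋯ ∘ s_{a_m}`. -/
def dem (w : List ℤ) : Equiv.Perm ℤ := w.foldl demStep 1

/-- `s_{a_m} ∘ ⋯ ∘ s_{a_1} ∘ 1 ∘ s_{a_1} ∘ ⋯ ∘ s_{a_m}`. -/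
def invEnd (w : List ℤ) : Equiv.Perm ℤ := dem (w.reverse ++ w)

/-- `w` is an involution word for `z`. -/
def IsInvWord (z : Equiv.Perm ℤ) (w : List ℤ) : Prop :=
  invEnd w = z ∧ ∀ v : List ℤ, invEnd v = z → w.length ≤ v.length

/-- The (0-based) index `j` is a commutation of the involution word `w`. -/
def IsCommutation (w : List ℤ) (j : ℕ) : Prop :=
  invEnd (w.take j) (w.getD j 0) = w.getD j 0 ∧
  invEnd (w.take j) (w.getD j 0 + 1) = w.getD j 0 + 1

/-- Remove primes from a primed word. -/
def unpr (w : List PLetter) : List ℤ := w.map Prod.fst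

/-- `w` is a primed involution word for `z`. -/
def IsPrimedInvWord (z : Equiv.Perm ℤ) (w : List PLetter) : Prop :=
  IsInvWord z (unpr w) ∧
  ∀ j, j < w.length → (w.getD j default).2 = true → IsCommutation (unpr w) j

/-- Value of a primed letter, doubled: `i ↦ 2i`, `i′ ↦ 2i - 1`. -/
def pvZ (l : PLetter) : ℤ := 2 * l.1 - (if l.2 then 1 else 0)

def StrictIncrW (w : List PLetter) : Prop := List.Chain' (· < ·) (w.map pvZ)

/-- Concatenation `a¹a²⋯aⁿ` of a tuple of primed words. -/
def concatT {n : ℕ} (a : Fin n → List PLetter) : List PLetter := (List.ofFn a).flatten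

/-- Membership in `Incr⁺_n(z)`. -/
def IncrP (n : ℕ) (z : Equiv.Perm ℤ) (a : Fin n → List PLetter) : Prop :=
  (∀ i, StrictIncrW (a i)) ∧ IsPrimedInvWord z (concatT a)

/-- Letters of `v` left unpaired by the pairing of Definition 5.5. -/
def pairAvail (v w : List PLetter) : List PLetter :=
  w.reverse.foldl (fun avail wj =>
    match avail.find? (fun x => decide (wj.1 < x.1)) with
    | some x => avail.erase x
    | none => avail) v

/-- Letters of `w` left unpaired by the pairing of Definition 5.5 (in increasing order). -/
def unpairedSnd (v w : List PLetter) : List PLetter :=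
  (w.reverse.foldl (fun (st : List PLetter × List PLetter) wj =>
    match st.1.find? (fun x => decide (wj.1 < x.1)) with
    | some x => (st.1.erase x, st.2)
    | none => (st.1, wj :: st.2)) (v, [])).2

def smallestAbsentAux : ℕ → ℤ → List ℤ → ℤ
  | 0, y, _ => y
  | fuel + 1, y, s => if y ∈ s then smallestAbsentAux fuel (y + 1) s else y

/-- The smallest integer `≥ y` not occurring in `s`. -/
def smallestAbsent (y : ℤ) (s : List ℤ) : ℤ := smallestAbsentAux (s.length + 1) y s

def largestAbsentAux : ℕ → ℤ → List ℤ → ℤ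
  | 0, y, _ => y
  | fuel + 1, y, s => if y ∈ s then largestAbsentAux fuel (y - 1) s else y

/-- The largest integer `≤ y` not occurring in `s`. -/
def largestAbsent (y : ℤ) (s : List ℤ) : ℤ := largestAbsentAux (s.length + 1) y s

/-- Ordered insertion of a primed letter into a strictly increasing primed word. -/
def insLetter : PLetter → List PLetter → List PLetter
  | l, [] => [l]
  | l, x :: xs => if pvZ l ≤ pvZ x then l :: x :: xs else x :: insLetter l xs

/-- Prime adjustment in case (L2) of Definition 5.6. -/
def adjustF (x y : ℤ) (p : List PLetter × List PLetter) : List PLetter × List PLetter :=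
  (List.range (y - x).toNat).foldl (fun q k =>
    let t : ℤ := x + k
    if ((t + 1, false) : PLetter) ∈ q.1 ∧ ((t, true) : PLetter) ∈ q.2 then
      (q.1.map (fun l => if l = ((t + 1, false) : PLetter) then (t + 1, true) else l),
       q.2.map (fun l => if l = ((t, true) : PLetter) then (t, false) else l))
    else q) p

/-- Prime adjustment in case (R2) of Definition 5.7. -/
def adjustE (x y : ℤ) (p : List PLetter × List PLetter) : List PLetter × List PLetter :=
  (List.range (y - x).toNat).foldl (fun q k =>
    let t : ℤ := x + k
    if ((t + 1, true) : PLetter) ∈ q.1 ∧ ((t, false) : PLetter) ∈ q.2 then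
      (q.1.map (fun l => if l = ((t + 1, true) : PLetter) then (t + 1, false) else l),
       q.2.map (fun l => if l = ((t, false) : PLetter) then (t, true) else l))
    else q) p

def upd2 {n : ℕ} (a : Fin n → List PLetter) (i : Fin n) (v : List PLetter)
    (j : Fin n) (w : List PLetter) : Fin n → List PLetter :=
  Function.update (Function.update a i v) j w

/-- The lowering operator `f_i` on increasing factorizations (Definition 5.6). -/
def rawIncrF (n i : ℕ) (a : Fin n → List PLetter) : Option (Fin n → List PLetter) :=
  if h : 1 ≤ i ∧ i ≤ n - 1 then
    let i1 : Fin n := ⟨i - 1, by omega⟩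
    let i2 : Fin n := ⟨i, by omega⟩
    let v := a i1
    let w := a i2
    match (pairAvail v w).getLast? with
    | none => none
    | some x =>
      let y := smallestAbsent x.1 (unpr w)
      if x.2 then
        some (upd2 a i1 (v.erase x) i2 (insLetter (y, true) w))
      else
        let p := adjustF x.1 y (v.erase x, insLetter (y, false) w)
        some (upd2 a i1 p.1 i2 p.2)
  else none

/-- The raising operator `e_i` on increasing factorizations (Definition 5.7). -/
def rawIncrE (n i : ℕ) (a : Fin n → List PLetter) : Option (Fin n → List PLetter) :=
  if h : 1 ≤ i ∧ i ≤ n - 1 then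
    let i1 : Fin n := ⟨i - 1, by omega⟩
    let i2 : Fin n := ⟨i, by omega⟩
    let v := a i1
    let w := a i2
    match (unpairedSnd v w).getLast? with
    | none => none
    | some y =>
      let x := largestAbsent y.1 (unpr v)
      if y.2 then
        some (upd2 a i1 (insLetter (x, true) v) i2 (w.erase y))
      else
        let p := adjustE x y.1 (insLetter (x, false) v, w.erase y)
        some (upd2 a i1 p.1 i2 p.2)
  else none

/-- The lowering operator `f_1̄` on increasing factorizations (Definition 5.8). -/
def rawIncrFbar (n : ℕ) (a : Fin n → List PLetter) : Option (Fin n → List PLetter) :=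
  if h : 2 ≤ n then
    let i1 : Fin n := ⟨0, by omega⟩
    let i2 : Fin n := ⟨1, by omega⟩
    match a i1 with
    | [] => none
    | l :: rest =>
      if (a i2).all (fun m => decide (pvZ l < pvZ m)) then
        match rest with
        | r :: rs =>
          if l.2 ≠ r.2 then
            some (upd2 a i1 ((r.1, !r.2) :: rs) i2 ((l.1, !l.2) :: a i2))
          else some (upd2 a i1 rest i2 (l :: a i2))
        | [] => some (upd2 a i1 [] i2 (l :: a i2))
      else none
  else none

/-- The raising operator `e_1̄` on increasing factorizations (Definition 5.9). -/
def rawIncrEbar (n : ℕ) (a : Fin n → List PLetter) : Option (Fin n → List PLetter) :=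
  if h : 2 ≤ n then
    let i1 : Fin n := ⟨0, by omega⟩
    let i2 : Fin n := ⟨1, by omega⟩
    match a i2 with
    | [] => none
    | l :: rest2 =>
      if (a i1).all (fun m => decide (pvZ l < pvZ m)) then
        match a i1 with
        | r :: rs =>
          if l.2 ≠ r.2 then
            some (upd2 a i1 ((l.1, !l.2) :: (r.1, !r.2) :: rs) i2 rest2)
          else some (upd2 a i1 (l :: a i1) i2 rest2)
        | [] => some (upd2 a i1 [l] i2 rest2)
      else none
  else none

/-- The operator `f_0` on increasing factorizations (Definition 5.10). -/
def rawIncrF0 (n : ℕ) (a : Fin n → List PLetter) : Option (Fin n → List PLetter) :=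
  if h : 1 ≤ n then
    let i1 : Fin n := ⟨0, by omega⟩
    match a i1 with
    | [] => none
    | l :: rest =>
      if l.2 = false then some (Function.update a i1 ((l.1, true) :: rest)) else none
  else none

/-- The operator `e_0` on increasing factorizations (Definition 5.10). -/
def rawIncrE0 (n : ℕ) (a : Fin n → List PLetter) : Option (Fin n → List PLetter) :=
  if h : 1 ≤ n then
    let i1 : Fin n := ⟨0, by omega⟩
    match a i1 with
    | [] => none
    | l :: rest =>
      if l.2 = true then some (Function.update a i1 ((l.1, false) :: rest)) else none
  else none

/-- The `q⁺_n`-crystal `Incr⁺_n(z)`. -/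
noncomputable def incrC (n : ℕ) (z : Equiv.Perm ℤ) : Crystal n (Subtype (IncrP n z)) where
  wt := fun a k => if h : 1 ≤ k ∧ k ≤ n then ((a.1 ⟨k - 1, by omega⟩).length : ℤ) else 0
  e := fun i => restrictP _ (rawIncrE n i)
  f := fun i => restrictP _ (rawIncrF n i)
  ebar := restrictP _ (rawIncrEbar n)
  fbar := restrictP _ (rawIncrFbar n)
  e0 := restrictP _ (rawIncrE0 n)
  f0 := restrictP _ (rawIncrF0 n)


/-! ### Coxeter-Knuth operators, marked cycles, descents -/

/-- The action of `ock` on a 3-letter window. -/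
def ockTriple (a b c : PLetter) : PLetter × PLetter × PLetter :=
  if a.1 = c.1 ∧ (b.1 = a.1 + 1 ∨ b.1 + 1 = a.1) ∧ b.2 = false ∧ ¬(a.2 = true ∧ c.2 = true) then
    ((b.1, c.2), (a.1, false), (b.1, a.2))
  else if (a.1 < c.1 ∧ c.1 < b.1) ∨ (b.1 < c.1 ∧ c.1 < a.1) then (b, a, c)
  else if (c.1 < a.1 ∧ a.1 < b.1) ∨ (b.1 < a.1 ∧ a.1 < c.1) then (a, c, b)
  else (a, b, c)

/-- The orthogonal Coxeter-Knuth operator `ock_i` (with 1-based window positions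
`i, i+1, i+2` for `i ≥ 1`, and the initial-2-letter rule for `i = 0`). -/
def ock (i : ℕ) (w : List PLetter) : List PLetter :=
  if i = 0 then
    match w with
    | x :: y :: rest => (y.1, x.2) :: (x.1, y.2) :: rest
    | _ => w
  else if i + 2 ≤ w.length then
    let a := w.getD (i - 1) default
    let b := w.getD i default
    let c := w.getD (i + 1) default
    let t := ockTriple a b c
    w.take (i - 1) ++ [t.1, t.2.1, t.2.2] ++ w.drop (i + 2)
  else w

/-- The cycle `γ_j(w) = s_{w_m} ⋯ s_{w_{j+2}} s_{w_{j+1}} ({w_j, w_j + 1})` (0-based `j`). -/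
def gammaCyc (w : List ℤ) (j : ℕ) : Set ℤ :=
  let P : Equiv.Perm ℤ := (((w.drop (j + 1)).reverse).map (fun t => Equiv.swap t (t + 1))).prod
  {P (w.getD j 0), P (w.getD j 0 + 1)}

/-- The set of marked cycles of a primed involution word. -/
def markedOf (w : List PLetter) : Set (Set ℤ) :=
  {S | ∃ j, j < w.length ∧ (w.getD j default).2 = true ∧ S = gammaCyc (unpr w) j}

/-- Descent set of a primed word (1-based positions). -/
def DesSet (w : List PLetter) : Set ℕ :=
  {i | 1 ≤ i ∧ i + 1 ≤ w.length ∧ pvZ (w.getD i default) < pvZ (w.getD (i - 1) default)}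

/-! ### Unprimed pairing and reduced words (Lemmas 5.3 and 5.6) -/

/-- Letters of `v` left unpaired by the pairing of Definition 5.5, unprimed version. -/
def pairAvailZ (v w : List ℤ) : List ℤ :=
  w.reverse.foldl (fun avail wj =>
    match avail.find? (fun x => decide (wj < x)) with
    | some x => avail.erase x
    | none => avail) v

/-- The permutation `s_{a_1} s_{a_2} ⋯ s_{a_m}`. -/
def permOf (w : List ℤ) : Equiv.Perm ℤ := (w.map (fun i => Equiv.swap i (i + 1))).prod

/-- `w` is a reduced word (for some element of `S_ℤ`). -/
def IsReducedWord (w : List ℤ) : Prop :=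
  ∀ v : List ℤ, permOf v = permOf w → w.length ≤ v.length

/-- Ordered insertion of an integer into a strictly increasing integer word. -/
def insLetterZ : ℤ → List ℤ → List ℤ
  | x, [] => [x]
  | x, y :: ys => if x ≤ y then x :: y :: ys else y :: insLetterZ x ys


/-! ### Semistandard shifted tableaux and their crystal operators -/

/-- Doubled value of a tableau letter: `k ↦ 2k`, `k′ ↦ 2k - 1`. -/
def pvN (l : NLet) : ℤ := 2 * (l.1 : ℤ) - (if l.2 then 1 else 0)

/-- `lam` is a strict partition with at most `n` parts (coordinates `1,…,n`). -/
def IsStrictPart (n : ℕ) (lam : ℕ → ℕ) : Prop :=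
  (∀ i, i = 0 ∨ n < i → lam i = 0) ∧
  (∀ i, 1 ≤ i → (lam (i + 1) < lam i ∨ (lam i = 0 ∧ lam (i + 1) = 0)))

/-- Membership of a (1-based) box in the shifted diagram of `lam`. -/
abbrev InSD (lam : ℕ → ℕ) (p : ℕ × ℕ) : Prop :=
  1 ≤ p.1 ∧ p.1 ≤ p.2 ∧ p.2 < p.1 + lam p.1

/-- `T` is a semistandard shifted tableau of shape `lam` with entries at most `n`. -/
def IsShTab (n : ℕ) (lam : ℕ → ℕ) (T : Tab) : Prop :=
  (∀ p : ℕ × ℕ, (T p).isSome ↔ InSD lam p) ∧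
  (∀ p v, T p = some v → 1 ≤ v.1 ∧ v.1 ≤ n) ∧
  (∀ i j v w, T (i, j) = some v → T (i, j + 1) = some w →
    pvN v ≤ pvN w ∧ (pvN v = pvN w → v.2 = false)) ∧
  (∀ i j v w, T (i, j) = some v → T (i + 1, j) = some w →
    pvN v ≤ pvN w ∧ (pvN v = pvN w → v.2 = true))

def setE (T : Tab) (q : ℕ × ℕ) (l : NLet) : Tab := fun p => if p = q then some l else T p

def ceilIs (T : Tab) (q : ℕ × ℕ) (v : ℕ) : Bool :=
  match T q with
  | some l => l.1 == v
  | none => false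

/-- Boxes of `T` with entries in `{i′, i, (i+1)′, i+1}`, in shifted reading order. -/
def readBoxes (T : Tab) (i bnd : ℕ) : List (ℕ × ℕ) :=
  ((List.range bnd).reverse.map (fun k0 =>
    let k := k0 + 1
    ((List.range bnd).filterMap (fun r0 =>
      let r := r0 + 1
      match T (r, k) with
      | some (v, true) => if v = i ∨ v = i + 1 then some ((r, k) : ℕ × ℕ) else none
      | _ => none)) ++
    ((List.range bnd).filterMap (fun c0 =>
      let c := c0 + 1
      match T (k, c) with
      | some (v, false) => if v = i ∨ v = i + 1 then some ((k, c) : ℕ × ℕ) else none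
      | _ => none)))).flatten

/-- Unpaired boxes after the parenthesis matching (entries `i` are `)`, `i+1` are `(`). -/
def bracketBoxes (T : Tab) (i : ℕ) (l : List (ℕ × ℕ)) : List (ℕ × ℕ) :=
  let r := l.foldl (fun (st : List (ℕ × ℕ) × List (ℕ × ℕ)) q =>
    if ceilIs T q (i + 1) then (q :: st.1, st.2)
    else
      match st.1 with
      | _o :: os => (os, st.2)
      | [] => (st.1, q :: st.2)) ([], [])
  r.2.reverse ++ r.1.reverse

/-- Most-northwest box of the ribbon (within `inSet`) containing the given box. -/
def nwEnd (inSet : ℕ × ℕ → Bool) : ℕ → ℕ × ℕ → ℕ × ℕ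
  | 0, p => p
  | fuel + 1, p =>
    if inSet (p.1 + 1, p.2) = true then nwEnd inSet fuel (p.1 + 1, p.2)
    else if 1 ≤ p.2 ∧ inSet (p.1, p.2 - 1) = true then nwEnd inSet fuel (p.1, p.2 - 1)
    else p

/-- Walk southeast through a ribbon looking for the first box satisfying `pred`. -/
def seFind (inSet pred : ℕ × ℕ → Bool) : ℕ → ℕ × ℕ → Option (ℕ × ℕ)
  | 0, _ => none
  | fuel + 1, p =>
    if pred p = true then some p
    else if 2 ≤ p.1 ∧ inSet (p.1 - 1, p.2) = true then seFind inSet pred fuel (p.1 - 1, p.2)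
    else if inSet (p.1, p.2 + 1) = true then seFind inSet pred fuel (p.1, p.2 + 1)
    else none

/-- Interchange the primes on the entries in boxes `p` and `q`. -/
def swapPr (T : Tab) (p q : ℕ × ℕ) : Tab :=
  match T p, T q with
  | some a, some b => if a.2 ≠ b.2 then setE (setE T p (a.1, b.2)) q (b.1, a.2) else T
  | _, _ => T

/-- The lowering operator `f_i` on shifted tableaux (Definition 6.4). -/
def tabF (n bnd i : ℕ) (T : Tab) : Option Tab :=
  if 1 ≤ i ∧ i ≤ n - 1 then
    match ((bracketBoxes T i (readBoxes T i bnd)).filter (fun q => ceilIs T q i)).getLast? with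
    | none => none
    | some q =>
      let x := q.1
      let y := q.2
      match T q with
      | some (_, false) =>
        if T (x, y + 1) = some (i + 1, true) then
          some (setE (setE T q (i + 1, true)) (x, y + 1) (i + 1, false))
        else if ¬(ceilIs T (x + 1, y) (i + 1) = true) then
          some (setE T q (i + 1, false))
        else
          let nw := nwEnd (fun r => ceilIs T r (i + 1)) (2 * bnd + 2) (x + 1, y)
          if nw.1 ≠ nw.2 then
            some (setE (setE T q (i + 1, true)) nw (i + 1, false))
          else
            some (swapPr (setE T q (i + 1, true)) (nw.1, nw.1) (nw.1 - 1, nw.1 - 1))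
      | some (_, true) =>
        if T (x + 1, y) = some (i, false) then
          some (setE (setE T q (i, false)) (x + 1, y) (i + 1, true))
        else if ¬(T (x, y + 1) = some (i, false) ∨ T (x, y + 1) = some (i + 1, true)) then
          some (setE T q (i + 1, true))
        else
          match seFind (fun r => ceilIs T r i)
              (fun r => decide (T r = some (i, false) ∧
                ¬(T (r.1, r.2 + 1) = some (i, false) ∨ T (r.1, r.2 + 1) = some (i + 1, true))))
              (2 * bnd + 2) q with
          | some r => some (setE (setE T q (i, false)) r (i + 1, true))
          | none => none
      | none => none
  else none

/-- The lowering operator `f_1̄` on shifted tableaux (Definition 6.7). -/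
def tabFbar (n bnd : ℕ) (T : Tab) : Option Tab :=
  if 2 ≤ n then
    let row1 : List (ℕ × ℕ) := (List.range bnd).map (fun c => (1, c + 1))
    if row1.any (fun q => decide (T q = some (2, true))) then none
    else
      match (row1.filter (fun q => ceilIs T q 1)).getLast? with
      | none => none
      | some q =>
        if q.1 = q.2 ∧ T q = some (1, false) then some (setE T q (2, false))
        else some (setE T q (2, true))
  else none

/-- The operator `f_0` on shifted tableaux. -/
def tabF0 (T : Tab) : Option Tab :=
  if T (1, 1) = some (1, false) then some (setE T (1, 1) (1, true))
  else none

/-- The operator `e_0` on shifted tableaux. -/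
def tabE0 (T : Tab) : Option Tab :=
  if T (1, 1) = some (1, true) then some (setE T (1, 1) (1, false))
  else none

-- Partial inverse of a partial operator, via choice.
open Classical in
noncomputable def pInv {α : Type} (g : α → Option α) (y : α) : Option α :=
  if h : ∃ x, g x = some y then some h.choose else none

/-- The underlying type of `ShTab⁺_n(lam)`. -/
def ShTy (n : ℕ) (lam : ℕ → ℕ) : Type := Subtype (IsShTab n lam)

/-- The `q⁺_n`-crystal `ShTab⁺_n(lam)`. -/
noncomputable def shtabC (n : ℕ) (lam : ℕ → ℕ) : Crystal n (ShTy n lam) :=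
  let bnd := n + lam 1 + 2
  let fop : ℕ → ShTy n lam → Option (ShTy n lam) := fun i => restrictP _ (tabF n bnd i)
  let fbarop : ShTy n lam → Option (ShTy n lam) := restrictP _ (tabFbar n bnd)
  { wt := fun T k =>
      if 1 ≤ k ∧ k ≤ n then
        (((List.range bnd).map (fun r =>
          ((List.range bnd).filter (fun c => ceilIs T.1 (r + 1, c + 1) k)).length)).sum : ℤ)
      else 0
    f := fop
    e := fun i => pInv (fop i)
    fbar := fbarop
    ebar := pInv fbarop
    f0 := restrictP _ tabF0
    e0 := restrictP _ tabE0 }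

/-- The tableau `T^highest_lam`, with every entry in row `i` equal to `i`. -/
def highestTab (lam : ℕ → ℕ) : Tab := fun p => if InSD lam p then some (p.1, false) else none

def shiftLam (lam : ℕ → ℕ) (k : ℕ) : ℕ → ℕ := fun i => lam (i + k)

/-- The defining property of `T^lowest_lam`: a semistandard shifted tableau of shape `lam`
with no primed diagonal entries, whose entries on the `k`-th ribbon all equal
`(n-k)′` or `n-k`. -/
def IsLowestSpec (n : ℕ) (lam : ℕ → ℕ) (T : Tab) : Prop :=
  IsShTab n lam T ∧
  (∀ i v, T (i, i) = some v → v.2 = false) ∧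
  (∀ k, k < n → ∀ p : ℕ × ℕ, InSD (shiftLam lam k) p → ¬InSD (shiftLam lam (k + 1)) p →
    ∀ v, T p = some v → v.1 = n - k)

/-- Add a prime to every diagonal entry. -/
def primeDiag (T : Tab) : Tab := fun p =>
  if p.1 = p.2 then (T p).map (fun l => (l.1, true)) else T p


/-! ### Orthogonal Edelman-Greene insertion -/

def setZ (T : ZTab) (q : ℕ × ℕ) (l : PLetter) : ZTab := fun p => if p = q then some l else T p

def swapPrZ (T : ZTab) (p q : ℕ × ℕ) : ZTab :=
  match T p, T q with
  | some a, some b => if a.2 ≠ b.2 then setZ (setZ T p (a.1, b.2)) q (b.1, a.2) else T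
  | _, _ => T

/-- One insertion of a letter into a shifted tableau, per Definition 7.1; returns the
resulting tableau, the box added, and whether the process ended in column insertion. -/
def oegIns (bnd : ℕ) : ℕ → ZTab → Bool → ℕ → PLetter → ZTab × ((ℕ × ℕ) × Bool)
  | 0, T, isCol, _, _ => (T, ((0, 0), isCol))
  | fuel + 1, T, isCol, k, x =>
    let cells : List (ℕ × ℕ) :=
      if isCol then (List.range bnd).map (fun r => (r + 1, k))
      else (List.range bnd).map (fun c => (k, k + c))
    let filled := cells.filter (fun q => (T q).isSome)
    match filled.find? (fun q => decide (x.1 ≤ ((T q).getD default).1)) with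
    | none =>
      match cells.find? (fun q => (T q).isNone) with
      | none => (T, ((0, 0), isCol))
      | some q =>
        if q.1 = q.2 then (setZ T q (x.1, false), (q, isCol || x.2))
        else (setZ T q x, (q, isCol))
    | some qy =>
      let y := (T qy).getD default
      if y.1 = x.1 then
        let T' := match filled.find? (fun q => decide (x.1 < ((T q).getD default).1)) with
          | some qt => swapPrZ T qy qt
          | none => T
        oegIns bnd fuel T' (decide (qy.1 = qy.2)) (k + 1) (x.1 + 1, x.2)
      else
        if qy.1 = qy.2 then
          oegIns bnd fuel (setZ T qy (x.1, false)) true (k + 1) (y.1, y.2 || x.2)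
        else
          oegIns bnd fuel (setZ T qy x) false (k + 1) y

def emptyZTab : ZTab := fun _ => none
def emptyTab : Tab := fun _ => none

/-- The orthogonal Edelman-Greene insertion and recording tableaux `(P^O_EG(a), Q^O_EG(a))`. -/
def oegPQ (n : ℕ) (a : Fin n → List PLetter) : ZTab × Tab :=
  let letters : List (PLetter × ℕ) :=
    (List.ofFn (fun i : Fin n => (a i).map (fun l => (l, (i : ℕ) + 1)))).flatten
  let bnd := letters.length + 2
  letters.foldl (fun (PQ : ZTab × Tab) xl =>
    let r := oegIns bnd bnd PQ.1 false 1 xl.1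
    (r.1, setE PQ.2 r.2.1 (xl.2, r.2.2))) (emptyZTab, emptyTab)

def oegP (n : ℕ) (a : Fin n → List PLetter) : ZTab := (oegPQ n a).1
def oegQ (n : ℕ) (a : Fin n → List PLetter) : Tab := (oegPQ n a).2

/-! ### Disjoint unions of crystals -/

def sigmaC {n : ℕ} {ι : Type} {β : ι → Type} (Cf : ∀ i, Crystal n (β i)) :
    Crystal n (Σ i, β i) where
  wt := fun x => (Cf x.1).wt x.2
  e := fun k x => ((Cf x.1).e k x.2).map (fun b => ⟨x.1, b⟩)
  f := fun k x => ((Cf x.1).f k x.2).map (fun b => ⟨x.1, b⟩)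
  ebar := fun x => ((Cf x.1).ebar x.2).map (fun b => ⟨x.1, b⟩)
  fbar := fun x => ((Cf x.1).fbar x.2).map (fun b => ⟨x.1, b⟩)
  e0 := fun x => ((Cf x.1).e0 x.2).map (fun b => ⟨x.1, b⟩)
  f0 := fun x => ((Cf x.1).f0 x.2).map (fun b => ⟨x.1, b⟩)

/-- Involutions in `S_ℤ` (finitely supported permutations of `ℤ`). -/
def IZ : Type := {z : Equiv.Perm ℤ // z * z = 1 ∧ {i : ℤ | z i ≠ i}.Finite}

/-- The disjoint union `⊔_z Incr⁺_n(z)` over all involutions `z ∈ S_ℤ`. -/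
def DomT (n : ℕ) : Type := Σ z : IZ, Subtype (IncrP n z.1)

noncomputable def domC (n : ℕ) : Crystal n (DomT n) := sigmaC (fun z : IZ => incrC n z.1)

/-- Strict partitions in `ℕ^n`. -/
def SPart (n : ℕ) : Type := {lam : ℕ → ℕ // IsStrictPart n lam}

/-- The disjoint union `⊔_lam ShTab⁺_n(lam)` over all strict partitions `lam ∈ ℕ^n`. -/
def CodT (n : ℕ) : Type := Σ lam : SPart n, ShTy n lam.1

noncomputable def codC (n : ℕ) : Crystal n (CodT n) := sigmaC (fun lam : SPart n => shtabC n lam.1)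

/-!
Pairing processes `b` from its largest letter down, each letter `t` taking the least available
letter of `a` above `t`. Since `x` stays available throughout while every letter of `a` above `x`
gets taken, a letter `t` can only take some `y > x` if `x ≤ t < y`; hence
`#{y ∈ a | x < y ≤ z} ≤ #{t ∈ b | x ≤ t < z}` for every `z`. Applied to the run `x+1, …, x+q`
of `a` this forces `x, …, x+q-1 ∈ b`, while `x - 1 ∈ b` would take `x` itself.
If also `x + q ∈ b`, both words contain the run `x, …, x+q`, and `x+q+1 ∉ a`, `x-1 ∉ b` let the
run of `a` commute past the letters of `ab` up to the run of `b`. Since `(s_x ⋯ s_{x+q})²` has a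
word of length `2q`, `ab` is then not reduced.
-/

theorem _root_.List.Pairwise.mem_and_le_of_getLast?_eq_some {α : Type*} [Preorder α]
    {l : List α} {x : α} (hl : l.Pairwise (· < ·)) (hx : l.getLast? = some x) :
    x ∈ l ∧ ∀ y ∈ l, y ≤ x := by
  obtain ⟨ys, rfl⟩ := List.getLast?_eq_some_iff.mp hx
  refine ⟨by simp, fun y hy => ?_⟩
  rcases List.mem_append.mp hy with hy | hy
  · exact ((List.pairwise_append.mp hl).2.2 y hy x (by simp)).le
  · rw [List.mem_singleton.mp hy]

theorem _root_.List.card_le_countP_of_subset {α : Type*} [DecidableEq α] {l : List α} {s : Finset α}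
    (hs : ∀ y ∈ s, y ∈ l) : s.card ≤ l.countP (· ∈ s) := by
  rw [List.countP_eq_length_filter]
  refine (Finset.card_le_card fun y hy => ?_).trans (List.toFinset_card_le _)
  simpa [List.mem_filter] using ⟨hs y hy, hy⟩

theorem _root_.List.Nodup.countP_le_card {α : Type*} [DecidableEq α] {l : List α} (hl : l.Nodup)
    {s t : Finset α} (hst : ∀ y ∈ l, y ∈ s → y ∈ t) : l.countP (· ∈ s) ≤ t.card := by
  rw [List.countP_eq_length_filter, ← List.toFinset_card_of_nodup (hl.filter _)]
  exact Finset.card_le_card fun y hy => by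
    simp only [List.mem_toFinset, List.mem_filter, decide_eq_true_eq] at hy
    exact hst y hy.1 hy.2

theorem exists_maximal_run_of_mem {l : List ℤ} {x : ℤ} (hx : x ∈ l) :
    ∃ q : ℕ, (∀ i : ℕ, i ≤ q → x + i ∈ l) ∧ x + q + 1 ∉ l := by
  have hex : ∃ q : ℕ, x + q + 1 ∉ l := by
    by_contra! h
    refine (List.finite_toSet l).not_infinite
      (Set.infinite_of_injective_forall_mem (f := fun q : ℕ => x + q + 1) (fun m n hmn => ?_) h)
    simpa using hmn
  refine ⟨Nat.find hex, fun i hiq => ?_, Nat.find_spec hex⟩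
  rcases Nat.eq_zero_or_pos i with rfl | hi
  · simpa using hx
  · have := Nat.find_min hex (show i - 1 < Nat.find hex by omega)
    push Not at this
    convert this using 1
    omega

def pairStep (avail : List ℤ) (t : ℤ) : List ℤ :=
  match avail.find? (fun x => decide (t < x)) with
  | some x => avail.erase x
  | none => avail

theorem pairAvailZ_eq_foldl_pairStep (v w : List ℤ) :
    pairAvailZ v w = w.reverse.foldl pairStep v := rfl

theorem pairStep_sublist (v : List ℤ) (t : ℤ) : (pairStep v t).Sublist v := by
  unfold pairStep
  split
  · exact List.erase_sublist
  · exact List.Sublist.refl v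

theorem foldl_pairStep_sublist (r v : List ℤ) : (r.foldl pairStep v).Sublist v := by
  induction r generalizing v with
  | nil => exact List.Sublist.refl v
  | cons t r ih => exact (ih _).trans (pairStep_sublist v t)

theorem pairStep_cases {v : List ℤ} (hv : v.Pairwise (· < ·)) (t : ℤ) :
    ((∀ y ∈ v, y ≤ t) ∧ pairStep v t = v) ∨
      ∃ e ∈ v, t < e ∧ (∀ y ∈ v, t < y → e ≤ y) ∧ pairStep v t = v.erase e := by
  unfold pairStep
  split
  case h_1 e h =>
    obtain ⟨hte, as, bs, rfl, has⟩ := List.find?_eq_some_iff_append.mp h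
    refine Or.inr ⟨e, by simp, by simpa using hte, fun y hy hty => ?_, rfl⟩
    simp only [Bool.not_eq_eq_eq_not, Bool.not_true, decide_eq_false_iff_not, not_lt] at has
    rcases List.mem_append.mp hy with hy | hy
    · exact absurd hty (not_lt.mpr (has y hy))
    · rcases List.mem_cons.mp hy with rfl | hy
      · rfl
      · exact (List.pairwise_cons.mp (List.pairwise_append.mp hv).2.1).1 y hy |>.le
  case h_2 h =>
    simp only [List.find?_eq_none, decide_eq_true_eq, not_lt] at h
    exact Or.inl ⟨h, rfl⟩

theorem sub_one_not_mem_of_mem_foldl_pairStep {r v : List ℤ} {x : ℤ} (hv : v.Pairwise (· < ·))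
    (hx : x ∈ r.foldl pairStep v) : x - 1 ∉ r := by
  induction r generalizing v with
  | nil => simp
  | cons t r ih =>
    rw [List.foldl_cons] at hx
    intro hmem
    rcases List.mem_cons.mp hmem with rfl | hr
    · have hxs : x ∈ pairStep v (x - 1) := (foldl_pairStep_sublist r _).subset hx
      rcases pairStep_cases hv (x - 1) with ⟨hle, heq⟩ | ⟨e, -, hte, hmin, heq⟩ <;> rw [heq] at hxs
      · linarith [hle x hxs]
      · obtain ⟨hne, hxv⟩ := hv.nodup.mem_erase_iff.mp hxs
        have := hmin x hxv (by omega)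
        omega
    · exact ih (hv.sublist (pairStep_sublist v t)) hx hr

theorem countP_Ioc_le_countP_Ico_of_foldl_pairStep {r v : List ℤ} {x : ℤ}
    (hv : v.Pairwise (· < ·)) (hx : x ∈ r.foldl pairStep v)
    (hmax : ∀ y ∈ r.foldl pairStep v, y ≤ x) (z : ℤ) :
    v.countP (· ∈ Finset.Ioc x z) ≤ r.countP (· ∈ Finset.Ico x z) := by
  induction r generalizing v with
  | nil =>
    rw [List.foldl_nil] at hmax
    refine (List.countP_eq_zero.mpr fun y hy => ?_).trans_le (Nat.zero_le _)
    simpa using fun h => absurd (hmax y hy) (not_le.mpr h)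
  | cons t r ih =>
    rw [List.foldl_cons] at hx hmax
    have hxs : x ∈ pairStep v t := (foldl_pairStep_sublist r _).subset hx
    have IH := ih (hv.sublist (pairStep_sublist v t)) hx hmax
    rw [List.countP_cons]
    rcases pairStep_cases hv t with ⟨-, heq⟩ | ⟨e, he, hte, hmin, heq⟩ <;> rw [heq] at IH hxs
    · omega
    · have hxt : e ∈ Finset.Ioc x z → t ∈ Finset.Ico x z := by
        simp only [Finset.mem_Ioc, Finset.mem_Ico]
        refine fun ⟨hxe, hez⟩ => ⟨not_lt.mp fun htx => ?_, hte.trans_le hez⟩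
        exact absurd (hmin x (List.mem_of_mem_erase hxs) htx) (not_le.mpr hxe)
      rw [(List.perm_cons_erase he).countP_eq, List.countP_cons]
      by_cases h : e ∈ Finset.Ioc x z
      · simp only [h, hxt h, decide_true, if_true]
        omega
      · simp only [h, decide_false, Bool.false_eq_true, if_false]
        split_ifs <;> omega

theorem sub_one_add_mem_of_foldl_pairStep {r v : List ℤ} {x : ℤ}
    (hv : v.Pairwise (· < ·)) (hr : r.Nodup) (hx : x ∈ r.foldl pairStep v)
    (hmax : ∀ y ∈ r.foldl pairStep v, y ≤ x) {i : ℕ} (hi : 1 ≤ i)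
    (hrun : ∀ j : ℕ, 1 ≤ j → j ≤ i → x + j ∈ v) : x - 1 + i ∈ r := by
  by_contra hnot
  have hv_count : i ≤ v.countP (· ∈ Finset.Ioc x (x + i)) := calc
    i = (Finset.Ioc x (x + i)).card := by simp
    _ ≤ _ := List.card_le_countP_of_subset fun y hy => by
      rw [Finset.mem_Ioc] at hy
      convert hrun (y - x).toNat (by omega) (by omega)
      omega
  have hr_count : r.countP (· ∈ Finset.Ico x (x + i)) ≤ i - 1 := calc
    _ ≤ (Finset.Ico x (x - 1 + i)).card := List.Nodup.countP_le_card hr fun y hyr hy => by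
      have : y ≠ x - 1 + i := fun h => hnot (h ▸ hyr)
      simp only [Finset.mem_Ico] at hy ⊢
      omega
    _ = i - 1 := by
      rw [Int.card_Ico]
      omega
  have := countP_Ioc_le_countP_Ico_of_foldl_pairStep hv hx hmax (x + i)
  omega

theorem permOf_append (u w : List ℤ) : permOf (u ++ w) = permOf u * permOf w := by
  simp [permOf]

theorem commute_permOf {u w : List ℤ} (h : ∀ i ∈ u, ∀ j ∈ w, i + 2 ≤ j ∨ j + 2 ≤ i) :
    Commute (permOf u) (permOf w) := by
  refine Commute.list_prod_left _ _ fun σ hσ => Commute.list_prod_right _ _ fun τ hτ => ?_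
  obtain ⟨i, hi, rfl⟩ := List.mem_map.mp hσ
  obtain ⟨j, hj, rfl⟩ := List.mem_map.mp hτ
  refine (Equiv.Perm.disjoint_swap_swap ?_).commute
  have := h i hi j hj
  simp only [List.nodup_cons, List.mem_cons, List.not_mem_nil, List.nodup_nil, or_false, not_or,
    not_false_eq_true, and_true]
  omega

def intervalWord (x : ℤ) (n : ℕ) : List ℤ := (List.range n).map fun i : ℕ => x + i

@[simp]
theorem length_intervalWord (x : ℤ) (n : ℕ) : (intervalWord x n).length = n := by
  simp [intervalWord]

theorem mem_intervalWord {x y : ℤ} {n : ℕ} : y ∈ intervalWord x n ↔ x ≤ y ∧ y < x + n := by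
  simp only [intervalWord, List.mem_map, List.mem_range]
  constructor
  · rintro ⟨j, hj, rfl⟩
    omega
  · exact fun h => ⟨(y - x).toNat, by omega, by omega⟩

theorem pairwise_intervalWord (x : ℤ) (n : ℕ) : (intervalWord x n).Pairwise (· < ·) :=
  List.pairwise_map.mpr (List.pairwise_lt_range.imp fun h => by simpa using h)

theorem permOf_intervalWord_apply (x : ℤ) (n : ℕ) (z : ℤ) :
    permOf (intervalWord x n) z =
      if x ≤ z ∧ z < x + n then z + 1 else if z = x + n then x else z := by
  induction n generalizing z with
  | zero =>
    simp only [intervalWord, permOf, List.range_zero, List.map_nil, List.prod_nil,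
      Equiv.Perm.coe_one, id_eq, CharP.cast_eq_zero, add_zero]
    split_ifs <;> omega
  | succ n ih =>
    rw [intervalWord, List.range_succ, List.map_append, ← intervalWord, permOf_append,
      Equiv.Perm.mul_apply, ih]
    simp only [permOf, List.map_cons, List.map_nil, List.prod_singleton, Equiv.swap_apply_def]
    push_cast
    split_ifs <;> omega

theorem permOf_intervalWord_mul_self (x : ℤ) (n : ℕ) :
    permOf (intervalWord x (n + 1)) * permOf (intervalWord x (n + 1)) =
      permOf (intervalWord (x + 1) n ++ intervalWord x n) := by
  ext z
  simp only [permOf_append, Equiv.Perm.mul_apply, permOf_intervalWord_apply]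
  push_cast
  split_ifs <;> omega

theorem eq_filter_append_intervalWord_append_filter {l : List ℤ}
    (hl : l.Pairwise (· < ·)) {x : ℤ} {n : ℕ} (hrun : ∀ i : ℕ, i < n → x + i ∈ l) :
    l = l.filter (· < x) ++ intervalWord x n ++ l.filter (x + n ≤ ·) := by
  have hsplit :
      (l.filter (· < x) ++ intervalWord x n ++ l.filter (x + n ≤ ·)).Pairwise (· < ·) := by
    simp only [List.pairwise_append, List.mem_append, List.mem_filter, decide_eq_true_eq,
      mem_intervalWord]
    refine ⟨⟨hl.sublist List.filter_sublist, pairwise_intervalWord x n, ?_⟩,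
      hl.sublist List.filter_sublist, ?_⟩ <;> intros <;> omega
  refine hl.eq_of_mem_iff hsplit fun y => ?_
  simp only [List.mem_append, List.mem_filter, decide_eq_true_eq, mem_intervalWord]
  constructor
  · intro hy
    simp only [hy, true_and]
    omega
  · rintro ((⟨hy, -⟩ | hy) | ⟨hy, -⟩)
    · exact hy
    · convert hrun (y - x).toNat (by omega)
      omega
    · exact hy

theorem not_isReducedWord_of_intervalWord_twice (A A₂ B₁ B₂ : List ℤ) (x : ℤ) (n : ℕ)
    (hA₂ : ∀ y ∈ A₂, x + n + 2 ≤ y) (hB₁ : ∀ y ∈ B₁, y + 2 ≤ x) :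
    ¬ IsReducedWord
      (A ++ intervalWord x (n + 1) ++ A₂ ++ (B₁ ++ intervalWord x (n + 1) ++ B₂)) := by
  set R := permOf (intervalWord x (n + 1))
  have hcomm : Commute R (permOf A₂ * permOf B₁) := by
    rw [← permOf_append]
    refine commute_permOf fun i hi j hj => ?_
    rw [mem_intervalWord] at hi
    rcases List.mem_append.mp hj with hj | hj
    · have := hA₂ j hj; omega
    · have := hB₁ j hj; omega
  obtain ⟨w, hw_len, hw⟩ : ∃ w : List ℤ, w.length = 2 * n ∧ permOf w = R * R :=
    ⟨_, by rw [List.length_append, length_intervalWord, length_intervalWord]; ring,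
      (permOf_intervalWord_mul_self x n).symm⟩
  intro hred
  have hlen := hred (A ++ w ++ A₂ ++ B₁ ++ B₂) (by
    simp only [permOf_append, hw, mul_assoc]
    congr 2
    calc R * (permOf A₂ * (permOf B₁ * permOf B₂))
        = R * (permOf A₂ * permOf B₁) * permOf B₂ := by simp only [mul_assoc]
      _ = permOf A₂ * permOf B₁ * R * permOf B₂ := by rw [hcomm.eq]
      _ = permOf A₂ * (permOf B₁ * (R * permOf B₂)) := by simp only [mul_assoc])
  simp only [List.length_append, length_intervalWord, hw_len] at hlen
  omega

theorem not_isReducedWord_of_common_run {a b : List ℤ} (ha : a.Pairwise (· < ·))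
    (hb : b.Pairwise (· < ·)) {x : ℤ} {q : ℕ} (hrun_a : ∀ i : ℕ, i ≤ q → x + i ∈ a)
    (hrun_b : ∀ i : ℕ, i ≤ q → x + i ∈ b) (hqa : x + q + 1 ∉ a) (hxb : x - 1 ∉ b) :
    ¬ IsReducedWord (a ++ b) := by
  rw [eq_filter_append_intervalWord_append_filter ha (n := q + 1) fun i hi => hrun_a i (by omega),
    eq_filter_append_intervalWord_append_filter hb (n := q + 1) fun i hi => hrun_b i (by omega)]
  refine not_isReducedWord_of_intervalWord_twice _ _ _ _ x q (fun y hy => ?_) (fun y hy => ?_)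
  · obtain ⟨hya, hy⟩ := List.mem_filter.mp hy
    have : y ≠ x + q + 1 := fun h => hqa (h ▸ hya)
    simp only [decide_eq_true_eq, Nat.cast_add, Nat.cast_one] at hy
    omega
  · obtain ⟨hyb, hy⟩ := List.mem_filter.mp hy
    have : y ≠ x - 1 := fun h => hxb (h ▸ hyb)
    simp only [decide_eq_true_eq] at hy
    omega

/-- (Lemma 5.3.) Let `a`, `b` be strictly increasing integer words with `ab`
reduced, and let `x` be the last unpaired letter of `a` with respect to `pair(a,b)`. Then
`x-1 ∉ b`, and there is `q ∈ ℕ` with `x+i ∈ a` and `x-1+i ∈ b` for `1 ≤ i ≤ q`, while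
`x+q+1 ∉ a` and `x+q ∉ b`. -/
theorem last_unpaired_run (a b : List ℤ) (ha : List.Chain' (· < ·) a)
    (hb : List.Chain' (· < ·) b) (hred : IsReducedWord (a ++ b))
    (x : ℤ) (hx : (pairAvailZ a b).getLast? = some x) :
    (x - 1) ∉ b ∧
    ∃ q : ℕ, (∀ i : ℕ, 1 ≤ i → i ≤ q → (x + (i : ℤ)) ∈ a ∧ (x - 1 + (i : ℤ)) ∈ b) ∧
      (x + (q : ℤ) + 1) ∉ a ∧ (x + (q : ℤ)) ∉ b := by
  have hpa : a.Pairwise (· < ·) := List.isChain_iff_pairwise.mp ha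
  have hpb : b.Pairwise (· < ·) := List.isChain_iff_pairwise.mp hb
  rw [pairAvailZ_eq_foldl_pairStep] at hx
  obtain ⟨hxu, hmax⟩ :=
    (hpa.sublist (foldl_pairStep_sublist _ _)).mem_and_le_of_getLast?_eq_some hx
  have hxb : x - 1 ∉ b := fun h =>
    sub_one_not_mem_of_mem_foldl_pairStep hpa hxu (List.mem_reverse.mpr h)
  obtain ⟨q, hrun_a, hqa⟩ := exists_maximal_run_of_mem ((foldl_pairStep_sublist _ _).subset hxu)
  have hrun_b : ∀ i : ℕ, 1 ≤ i → i ≤ q → x - 1 + i ∈ b := fun i hi hiq =>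
    List.mem_reverse.mp <| sub_one_add_mem_of_foldl_pairStep hpa (List.nodup_reverse.mpr hpb.nodup)
      hxu hmax hi fun j _ hji => hrun_a j (hji.trans hiq)
  refine ⟨hxb, q, fun i hi hiq => ⟨hrun_a i hiq, hrun_b i hi hiq⟩, hqa, fun hqb => ?_⟩
  refine not_isReducedWord_of_common_run hpa hpb hrun_a (fun i hi => ?_) hqa hxb hred
  rcases hi.lt_or_eq with hi | rfl
  · convert hrun_b (i + 1) (by omega) hi using 1
    push_cast
    ring
  · exact hqb

end QPaper
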